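/- arXiv:2112.01287 — 2 statements merged into one kernel-verified Lean document; each statement's English description precedes it below -/
import Mathlib

section
/- Let σ > 0, K > 0, r ∈ ℝ and let p ≥ 1 be an integer. Define, for τ > 0 and x > 0, u(τ,x) = ∑_{q=0}^{p} (p!/(q!(p−q)!))·x^{p−q}·(−K)^{q}·e^{(p−q−1)(r + (1/2)(p−q)σ²)τ}·N(d_{p,q}(τ,x)), where d_{p,q}(τ,x) = (ln(x/K) + (r + (p − q − 1/2)σ²)τ)/(σ√τ). Then u satisfies the time-reversed Black–Scholes PDE ∂u/∂τ = (1/2)σ²x² ∂²u/∂x² + r·x·∂u/∂x − r·u at every point (τ,x) with τ > 0 and x > 0. -/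
/-!
The price is a linear combination of the terms `x ^ m e^{cτ} N(d)` with `m = p - q`, and each
term solves the equation on its own. The factor `x ^ m e^{cτ}` is an elementary solution, and
`N(d)` is the price of a digital option in a market with drift `r + m σ²` and no discounting.
Since `x ∂ₓ(x ^ m) = m x ^ m`, the cross term `σ² x² ∂ₓv ∂ₓw` of the product rule exactly
removes the extra drift `m σ²`, so the product solves the equation with drift and discount `r`.
-/

/-- The standard normal cumulative distribution function. -/
noncomputable def stdNormalCdf (d : ℝ) : ℝ :=
  (Real.sqrt (2 * Real.pi))⁻¹ * ∫ y in Set.Iic d, Real.exp (-(y ^ 2) / 2)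

/-- `d_{p,q}(τ,x) = (ln(x/K) + (r + (p − q − 1/2)σ²)τ)/(σ√τ)`. -/
noncomputable def dpq (σ K r : ℝ) (p q : ℕ) (τ x : ℝ) : ℝ :=
  (Real.log (x / K) + (r + ((p : ℝ) - q - 1 / 2) * σ ^ 2) * τ) / (σ * Real.sqrt τ)

/-- The closed-form Black-Scholes price of a powered option with power `p` and strike `K`,
paying `max (x - K) 0 ^ p` at maturity. -/
noncomputable def bsPowered (σ K r : ℝ) (p : ℕ) (τ x : ℝ) : ℝ :=
  ∑ q ∈ Finset.range (p + 1),
    (Nat.choose p q : ℝ) * x ^ (p - q) * (-K) ^ q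
      * Real.exp (((p : ℝ) - q - 1) * (r + 1 / 2 * ((p : ℝ) - q) * σ ^ 2) * τ)
      * stdNormalCdf (dpq σ K r p q τ x)

open Filter Topology

noncomputable def stdNormalPdf (d : ℝ) : ℝ :=
  (Real.sqrt (2 * Real.pi))⁻¹ * Real.exp (-(d ^ 2) / 2)

lemma integrable_exp_neg_sq_div_two :
    MeasureTheory.Integrable (fun y : ℝ => Real.exp (-(y ^ 2) / 2)) := by
  convert integrable_exp_neg_mul_sq (by norm_num : (0 : ℝ) < 1 / 2) using 2 with y
  ring_nf

lemma hasDerivAt_stdNormalCdf (d : ℝ) : HasDerivAt stdNormalCdf (stdNormalPdf d) d := by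
  have hint := integrable_exp_neg_sq_div_two
  have hsplit : ∀ z, stdNormalCdf z = (Real.sqrt (2 * Real.pi))⁻¹ *
      ((∫ y in Set.Iic 0, Real.exp (-(y ^ 2) / 2))
        + ∫ y in (0 : ℝ)..z, Real.exp (-(y ^ 2) / 2)) := by
    intro z
    rw [← intervalIntegral.integral_Iic_sub_Iic hint.integrableOn hint.integrableOn, stdNormalCdf]
    ring
  have hftc : HasDerivAt (fun z => ∫ y in (0 : ℝ)..z, Real.exp (-(y ^ 2) / 2))
      (Real.exp (-(d ^ 2) / 2)) d :=
    intervalIntegral.integral_hasDerivAt_right hint.intervalIntegrable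
      hint.aestronglyMeasurable.stronglyMeasurableAtFilter (by fun_prop)
  rw [funext hsplit]
  exact (hftc.const_add _).const_mul _

lemma hasDerivAt_stdNormalPdf (d : ℝ) : HasDerivAt stdNormalPdf (-d * stdNormalPdf d) d := by
  have hexponent : HasDerivAt (fun y : ℝ => -(y ^ 2) / 2) (-d) d :=
    ((hasDerivAt_pow 2 d).fun_neg.div_const 2).congr_deriv (by ring)
  exact (hexponent.exp.const_mul _).congr_deriv (by rw [stdNormalPdf]; ring)

/-- Differentiability of `u τ` near `x` makes `deriv (u τ)` its true derivative there, which the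
closure under sums and products needs. -/
def SolvesBlackScholesAt (σ b ρ : ℝ) (u : ℝ → ℝ → ℝ) (τ x : ℝ) : Prop :=
  (∀ᶠ y in 𝓝 x, DifferentiableAt ℝ (u τ) y) ∧
    ∃ uxx, HasDerivAt (deriv (u τ)) uxx x ∧
      HasDerivAt (fun t => u t x)
        (1 / 2 * σ ^ 2 * x ^ 2 * uxx + b * x * deriv (u τ) x - ρ * u τ x) τ

namespace SolvesBlackScholesAt

variable {σ b ρ τ x : ℝ} {u v : ℝ → ℝ → ℝ}

lemma of_hasDerivAt {ux : ℝ → ℝ} {uxx ut : ℝ}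
    (hux : ∀ᶠ y in 𝓝 x, HasDerivAt (u τ) (ux y) y) (huxx : HasDerivAt ux uxx x)
    (hut : HasDerivAt (fun t => u t x) ut τ)
    (hpde : ut = 1 / 2 * σ ^ 2 * x ^ 2 * uxx + b * x * ux x - ρ * u τ x) :
    SolvesBlackScholesAt σ b ρ u τ x := by
  have hderiv : deriv (u τ) =ᶠ[𝓝 x] ux := hux.mono fun y hy => hy.deriv
  refine ⟨hux.mono fun y hy => hy.differentiableAt, uxx,
    huxx.congr_of_eventuallyEq hderiv, ?_⟩
  rwa [hderiv.eq_of_nhds, ← hpde]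

lemma eventually_hasDerivAt (hu : SolvesBlackScholesAt σ b ρ u τ x) :
    ∀ᶠ y in 𝓝 x, HasDerivAt (u τ) (deriv (u τ) y) y :=
  hu.1.mono fun _ hy => hy.hasDerivAt

lemma zero : SolvesBlackScholesAt σ b ρ (fun _ _ => 0) τ x :=
  of_hasDerivAt (ux := fun _ => 0) (Eventually.of_forall fun y => hasDerivAt_const y 0)
    (hasDerivAt_const x 0) (hasDerivAt_const τ 0) (by ring)

lemma add (hu : SolvesBlackScholesAt σ b ρ u τ x) (hv : SolvesBlackScholesAt σ b ρ v τ x) :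
    SolvesBlackScholesAt σ b ρ (fun t y => u t y + v t y) τ x := by
  obtain ⟨uxx, huxx, hut⟩ := hu.2
  obtain ⟨vxx, hvxx, hvt⟩ := hv.2
  refine of_hasDerivAt (ux := fun y => deriv (u τ) y + deriv (v τ) y) ?_ (huxx.add hvxx)
    (hut.add hvt) (by ring)
  filter_upwards [hu.eventually_hasDerivAt, hv.eventually_hasDerivAt] with y hu' hv'
  exact hu'.add hv'

lemma const_mul (c : ℝ) (hu : SolvesBlackScholesAt σ b ρ u τ x) :
    SolvesBlackScholesAt σ b ρ (fun t y => c * u t y) τ x := by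
  obtain ⟨uxx, huxx, hut⟩ := hu.2
  refine of_hasDerivAt (ux := fun y => c * deriv (u τ) y) ?_ (huxx.const_mul c)
    (hut.const_mul c) (by ring)
  filter_upwards [hu.eventually_hasDerivAt] with y hu'
  exact hu'.const_mul c

lemma sum {ι : Type*} {u : ι → ℝ → ℝ → ℝ} (s : Finset ι)
    (hu : ∀ i ∈ s, SolvesBlackScholesAt σ b ρ (u i) τ x) :
    SolvesBlackScholesAt σ b ρ (fun t y => ∑ i ∈ s, u i t y) τ x := by
  classical
  induction s using Finset.induction_on with
  | empty => simpa using zero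
  | insert i s hi ih =>
    simp_rw [Finset.sum_insert hi]
    exact (hu i (s.mem_insert_self i)).add (ih fun j hj => hu j (s.mem_insert_of_mem hj))

/-- By `hdrift`, the cross term `σ² x² ∂ₓv ∂ₓw` of the product rule equals `(b' - b) x v ∂ₓw`. -/
lemma mul {w : ℝ → ℝ → ℝ} {b' ρ' : ℝ} (hv : SolvesBlackScholesAt σ b ρ v τ x)
    (hw : SolvesBlackScholesAt σ b' ρ' w τ x)
    (hdrift : σ ^ 2 * x * deriv (v τ) x = (b' - b) * v τ x) :
    SolvesBlackScholesAt σ b (ρ + ρ') (fun t y => v t y * w t y) τ x := by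
  obtain ⟨vxx, hvxx, hvt⟩ := hv.2
  obtain ⟨wxx, hwxx, hwt⟩ := hw.2
  have hvx := hv.eventually_hasDerivAt.self_of_nhds
  have hwx := hw.eventually_hasDerivAt.self_of_nhds
  refine of_hasDerivAt (ux := fun y => deriv (v τ) y * w τ y + v τ y * deriv (w τ) y) ?_
    ((hvxx.mul hwx).add (hvx.mul hwxx)) (hvt.mul hwt) ?_
  · filter_upwards [hv.eventually_hasDerivAt, hw.eventually_hasDerivAt] with y hv' hw'
    exact hv'.mul hw'
  · linear_combination -x * deriv (w τ) x * hdrift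

end SolvesBlackScholesAt

lemma natCast_mul_pow_sub_one_mul_self (m : ℕ) (x : ℝ) : m * x ^ (m - 1) * x = m * x ^ m := by
  cases m <;> simp [pow_succ, mul_assoc]

lemma solvesBlackScholesAt_pow_mul_exp {σ b ρ c : ℝ} (m : ℕ)
    (hc : c = 1 / 2 * σ ^ 2 * m * (m - 1) + b * m - ρ) (τ x : ℝ) :
    SolvesBlackScholesAt σ b ρ (fun t y => y ^ m * Real.exp (c * t)) τ x := by
  refine SolvesBlackScholesAt.of_hasDerivAt (ux := fun y => m * y ^ (m - 1) * Real.exp (c * τ))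
    (Eventually.of_forall fun y => (hasDerivAt_pow m y).mul_const _)
    (((hasDerivAt_pow (m - 1) x).const_mul (m : ℝ)).mul_const _)
    (((hasDerivAt_id' τ).const_mul c).exp.const_mul (x ^ m)) ?_
  subst hc
  rcases m with _ | _ | m <;> push_cast [Nat.add_sub_cancel] <;> ring

section Digital

variable {σ K : ℝ} (r : ℝ) (p q : ℕ)

lemma hasDerivAt_dpq_space (hK : K ≠ 0) (τ : ℝ) {y : ℝ} (hy : y ≠ 0) :
    HasDerivAt (dpq σ K r p q τ) (y * (σ * Real.sqrt τ))⁻¹ y := by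
  have hlog := (Real.hasDerivAt_log (div_ne_zero hy hK)).comp y ((hasDerivAt_id' y).div_const K)
  refine ((hlog.add_const _).div_const (σ * Real.sqrt τ)).congr_deriv ?_
  field_simp

lemma hasDerivAt_dpq_time (hσ : σ ≠ 0) (x : ℝ) {τ : ℝ} (hτ : 0 < τ) :
    HasDerivAt (fun t => dpq σ K r p q t x)
      ((r + ((p : ℝ) - q - 1 / 2) * σ ^ 2) / (σ * Real.sqrt τ)
        - dpq σ K r p q τ x / (2 * τ)) τ := by
  have hsqrt := Real.sqrt_pos.2 hτ
  have h := (((hasDerivAt_id' τ).const_mul (r + ((p : ℝ) - q - 1 / 2) * σ ^ 2)).const_add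
    (Real.log (x / K))).div ((Real.hasDerivAt_sqrt hτ.ne').const_mul σ) (by positivity)
  refine h.congr_deriv ?_
  rw [dpq]
  set s := Real.sqrt τ
  rw [show τ = s ^ 2 from (Real.sq_sqrt hτ.le).symm]
  field_simp

lemma solvesBlackScholesAt_stdNormalCdf_dpq (hσ : σ ≠ 0) (hK : K ≠ 0) {τ x : ℝ} (hτ : 0 < τ)
    (hx : x ≠ 0) :
    SolvesBlackScholesAt σ (r + ((p : ℝ) - q) * σ ^ 2) 0
      (fun t y => stdNormalCdf (dpq σ K r p q t y)) τ x := by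
  have hsqrt := Real.sqrt_pos.2 hτ
  refine SolvesBlackScholesAt.of_hasDerivAt
    (ux := fun y => stdNormalPdf (dpq σ K r p q τ y) * (y * (σ * Real.sqrt τ))⁻¹) ?_
    (((hasDerivAt_stdNormalPdf _).comp x (hasDerivAt_dpq_space r p q hK τ hx)).mul
      (((hasDerivAt_id' x).mul_const (σ * Real.sqrt τ)).inv (by positivity)))
    ((hasDerivAt_stdNormalCdf _).comp τ (hasDerivAt_dpq_time r p q hσ x hτ)) ?_
  · filter_upwards [eventually_ne_nhds hx] with y hy
    exact (hasDerivAt_stdNormalCdf _).comp y (hasDerivAt_dpq_space r p q hK τ hy)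
  · simp only [Function.comp_apply]
    set s := Real.sqrt τ
    rw [show τ = s ^ 2 from (Real.sq_sqrt hτ.le).symm]
    field_simp
    ring

end Digital

noncomputable def bsPoweredTerm (σ K r : ℝ) (p q : ℕ) (τ x : ℝ) : ℝ :=
  x ^ (p - q) * Real.exp (((p : ℝ) - q - 1) * (r + 1 / 2 * ((p : ℝ) - q) * σ ^ 2) * τ)
    * stdNormalCdf (dpq σ K r p q τ x)

lemma bsPowered_eq_sum (σ K r : ℝ) (p : ℕ) :
    bsPowered σ K r p = fun τ x =>
      ∑ q ∈ Finset.range (p + 1), ((p.choose q : ℝ) * (-K) ^ q) * bsPoweredTerm σ K r p q τ x := by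
  funext τ x
  exact Finset.sum_congr rfl fun q _ => by rw [bsPoweredTerm]; ring

lemma solvesBlackScholesAt_bsPoweredTerm {σ K : ℝ} (r : ℝ) {p q : ℕ} (hq : q ≤ p) (hσ : σ ≠ 0)
    (hK : K ≠ 0) {τ x : ℝ} (hτ : 0 < τ) (hx : x ≠ 0) :
    SolvesBlackScholesAt σ r r (bsPoweredTerm σ K r p q) τ x := by
  have hcast : ((p - q : ℕ) : ℝ) = p - q := Nat.cast_sub hq
  have hmono := solvesBlackScholesAt_pow_mul_exp (σ := σ) (b := r) (ρ := r)
    (c := ((p : ℝ) - q - 1) * (r + 1 / 2 * ((p : ℝ) - q) * σ ^ 2)) (p - q)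
    (by rw [hcast]; ring) τ x
  have hdigital := solvesBlackScholesAt_stdNormalCdf_dpq (K := K) r p q hσ hK hτ hx
  set E := Real.exp (((p : ℝ) - q - 1) * (r + 1 / 2 * ((p : ℝ) - q) * σ ^ 2) * τ)
  have hderiv := ((hasDerivAt_pow (p - q) x).mul_const E).deriv
  have hterm := hmono.mul hdigital (by
    rw [hderiv]
    linear_combination σ ^ 2 * E * natCast_mul_pow_sub_one_mul_self (p - q) x
      + σ ^ 2 * E * x ^ (p - q) * hcast)
  rw [add_zero] at hterm
  exact hterm

theorem bsPowered_solves_pde_general (σ K r : ℝ) (hσ : 0 < σ) (hK : 0 < K)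
    (p : ℕ) (τ x : ℝ) (hτ : 0 < τ) (hx : 0 < x) :
    ∃ ux uxx : ℝ,
      HasDerivAt (fun y : ℝ => bsPowered σ K r p τ y) ux x ∧
      HasDerivAt (deriv (fun y : ℝ => bsPowered σ K r p τ y)) uxx x ∧
      HasDerivAt (fun t : ℝ => bsPowered σ K r p t x)
        (1 / 2 * σ ^ 2 * x ^ 2 * uxx + r * x * ux - r * bsPowered σ K r p τ x) τ := by
  have hsolves : SolvesBlackScholesAt σ r r (bsPowered σ K r p) τ x := by
    rw [bsPowered_eq_sum]
    exact SolvesBlackScholesAt.sum _ fun q hq => .const_mul _ <|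
      solvesBlackScholesAt_bsPoweredTerm r (Finset.mem_range_succ_iff.mp hq) hσ.ne' hK.ne' hτ hx.ne'
  obtain ⟨hdiff, uxx, huxx, hut⟩ := hsolves
  exact ⟨_, uxx, hdiff.self_of_nhds.hasDerivAt, huxx, hut⟩

/-- The Black-Scholes powered-option price satisfies the time-reversed Black-Scholes PDE
`∂u/∂τ = (1/2) σ² x² ∂²u/∂x² + r x ∂u/∂x − r u` for all `τ > 0`, `x > 0`. -/
theorem bsPowered_solves_pde (σ K r : ℝ) (hσ : 0 < σ) (hK : 0 < K)
    (p : ℕ) (hp : 1 ≤ p) (τ x : ℝ) (hτ : 0 < τ) (hx : 0 < x) :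
    ∃ ux uxx : ℝ,
      HasDerivAt (fun y : ℝ => bsPowered σ K r p τ y) ux x ∧
      HasDerivAt (deriv (fun y : ℝ => bsPowered σ K r p τ y)) uxx x ∧
      HasDerivAt (fun t : ℝ => bsPowered σ K r p t x)
        (1 / 2 * σ ^ 2 * x ^ 2 * uxx + r * x * ux - r * bsPowered σ K r p τ x) τ :=
  bsPowered_solves_pde_general σ K r hσ hK p τ x hτ hx
end

section
/- Let σ > 0, K > 0, r ∈ ℝ and let p ≥ 1 be an integer, and let u(τ,x) = ∑_{q=0}^{p} (p!/(q!(p−q)!))·x^{p−q}·(−K)^{q}·e^{(p−q−1)(r + (1/2)(p−q)σ²)τ}·N(d_{p,q}(τ,x)) with d_{p,q}(τ,x) = (ln(x/K) + (r + (p − q − 1/2)σ²)τ)/(σ√τ) be the Black–Scholes powered-option price. Then for every x > 0 with x ≠ K, u(τ,x) tends, as τ → 0⁺, to (x − K)^p if x > K and to 0 if x < K; that is, it recovers the payoff max(x − K, 0)^p. -/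
open MeasureTheory Filter Real Set Topology

lemma gauss_integrable : Integrable (fun y : ℝ => Real.exp (-(y ^ 2) / 2)) := by
  have h := integrable_exp_neg_mul_sq (by norm_num : (0:ℝ) < 1/2)
  convert h using 2 with y
  ring_nf

lemma gauss_total : (∫ y : ℝ, Real.exp (-(y ^ 2) / 2)) = Real.sqrt (2 * Real.pi) := by
  have h := integral_gaussian (1/2 : ℝ)
  rw [show Real.pi / (1/2 : ℝ) = 2 * Real.pi by ring] at h
  rw [← h]
  congr 1; ext y; congr 1; ring

lemma cdf_atTop : Tendsto stdNormalCdf atTop (𝓝 1) := by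
  have h := (MeasureTheory.aecover_Iic (μ := (volume : Measure ℝ))
    (tendsto_id : Tendsto (fun d : ℝ => d) atTop atTop)).integral_tendsto_of_countably_generated
    gauss_integrable
  rw [gauss_total] at h
  have hc : Real.sqrt (2 * Real.pi) ≠ 0 :=
    ne_of_gt (Real.sqrt_pos.2 Real.two_pi_pos)
  have h2 := h.const_mul (Real.sqrt (2 * Real.pi))⁻¹
  rw [inv_mul_cancel₀ hc] at h2
  exact h2

lemma cdf_atBot : Tendsto stdNormalCdf atBot (𝓝 0) := by
  have h : Tendsto (fun d : ℝ => ∫ y in Set.Iic d, Real.exp (-(y ^ 2) / 2)) atBot (𝓝 0) := by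
    have heq : ∀ d : ℝ, (∫ y in Set.Iic d, Real.exp (-(y ^ 2) / 2))
        = ∫ y : ℝ, (Set.Iic d).indicator (fun y => Real.exp (-(y ^ 2) / 2)) y := fun d =>
      (MeasureTheory.integral_indicator measurableSet_Iic).symm
    simp_rw [heq]
    have : (0 : ℝ) = ∫ y : ℝ, (0 : ℝ) := by simp
    rw [this]
    apply MeasureTheory.tendsto_integral_filter_of_dominated_convergence
      (fun y => Real.exp (-(y ^ 2) / 2))
    · exact Eventually.of_forall fun d =>
        gauss_integrable.aestronglyMeasurable.indicator measurableSet_Iic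
    · exact Eventually.of_forall fun d => ae_of_all _ fun y =>
        le_trans (norm_indicator_le_norm_self _ _)
          (by rw [Real.norm_eq_abs, abs_of_pos (Real.exp_pos _)])
    · exact gauss_integrable
    · refine ae_of_all _ fun y => ?_
      have : ∀ᶠ d in atBot, (Set.Iic d).indicator
          (fun y => Real.exp (-(y ^ 2) / 2)) y = 0 := by
        filter_upwards [eventually_lt_atBot y] with d hd
        simp [Set.indicator_of_notMem, not_le.2 hd]
      exact Tendsto.congr' (this.mono fun d hd => hd.symm) tendsto_const_nhds
  have h2 := h.const_mul (Real.sqrt (2 * Real.pi))⁻¹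
  rw [mul_zero] at h2
  exact h2

lemma dpq_aux (σ K r : ℝ) (p q : ℕ) (x : ℝ) :
    Tendsto (fun τ : ℝ => Real.log (x / K) + (r + ((p : ℝ) - q - 1 / 2) * σ ^ 2) * τ)
      (𝓝[>] (0:ℝ)) (𝓝 (Real.log (x / K))) := by
  have hc : Continuous fun τ : ℝ =>
      Real.log (x / K) + (r + ((p : ℝ) - q - 1 / 2) * σ ^ 2) * τ := by continuity
  have := (hc.tendsto 0).mono_left (nhdsWithin_le_nhds (s := Set.Ioi (0:ℝ)))
  simpa using this

lemma den_aux (σ : ℝ) (hσ : 0 < σ) :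
    Tendsto (fun τ : ℝ => (σ * Real.sqrt τ)⁻¹) (𝓝[>] (0:ℝ)) atTop := by
  apply tendsto_inv_nhdsGT_zero.comp
  refine tendsto_nhdsWithin_of_tendsto_nhds_of_eventually_within _ ?_ ?_
  · have hc : Continuous fun τ : ℝ => σ * Real.sqrt τ :=
      continuous_const.mul Real.continuous_sqrt
    simpa using (hc.tendsto 0).mono_left (nhdsWithin_le_nhds (s := Set.Ioi (0:ℝ)))
  · filter_upwards [self_mem_nhdsWithin] with τ hτ
    exact mul_pos hσ (Real.sqrt_pos.2 hτ)

lemma dpq_tendsto_atTop (σ K r : ℝ) (hσ : 0 < σ) (hK : 0 < K) (p q : ℕ) (x : ℝ)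
    (hx : K < x) : Tendsto (fun τ : ℝ => dpq σ K r p q τ x) (𝓝[>] (0:ℝ)) atTop := by
  have hL : 0 < Real.log (x / K) := Real.log_pos (by rw [lt_div_iff₀ hK]; linarith)
  simpa [dpq, div_eq_mul_inv] using
    Filter.Tendsto.pos_mul_atTop hL (dpq_aux σ K r p q x) (den_aux σ hσ)

lemma dpq_tendsto_atBot (σ K r : ℝ) (hσ : 0 < σ) (hK : 0 < K) (p q : ℕ) (x : ℝ)
    (hx0 : 0 < x) (hx : x < K) :
    Tendsto (fun τ : ℝ => dpq σ K r p q τ x) (𝓝[>] (0:ℝ)) atBot := by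
  have hL : Real.log (x / K) < 0 :=
    Real.log_neg (by positivity) (by rw [div_lt_one hK]; linarith)
  simpa [dpq, div_eq_mul_inv] using
    Filter.Tendsto.neg_mul_atTop hL (dpq_aux σ K r p q x) (den_aux σ hσ)

/-- As time to maturity tends to zero from the right, the Black-Scholes powered-option
price tends to `(x - K)^p` if `x > K` and to `0` if `x < K`, i.e. it recovers the payoff
`max (x - K) 0 ^ p`. -/
theorem bsPowered_tendsto_payoff (σ K r : ℝ) (hσ : 0 < σ) (hK : 0 < K)
    (p : ℕ) (hp : 1 ≤ p) (x : ℝ) (hx : 0 < x) (hxK : x ≠ K) :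
    (K < x → Filter.Tendsto (fun τ : ℝ => bsPowered σ K r p τ x)
      (nhdsWithin 0 (Set.Ioi 0)) (nhds ((x - K) ^ p))) ∧
    (x < K → Filter.Tendsto (fun τ : ℝ => bsPowered σ K r p τ x)
      (nhdsWithin 0 (Set.Ioi 0)) (nhds 0)) := by
  have hexp : ∀ q : ℕ, Tendsto (fun τ : ℝ =>
      Real.exp (((p : ℝ) - q - 1) * (r + 1 / 2 * ((p : ℝ) - q) * σ ^ 2) * τ))
      (𝓝[>] (0:ℝ)) (𝓝 1) := by
    intro q
    have hc : Continuous fun τ : ℝ =>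
        Real.exp (((p : ℝ) - q - 1) * (r + 1 / 2 * ((p : ℝ) - q) * σ ^ 2) * τ) := by continuity
    have := (hc.tendsto 0).mono_left (nhdsWithin_le_nhds (s := Set.Ioi (0:ℝ)))
    simpa using this
  constructor
  · intro hKx
    have hlim : Tendsto (fun τ : ℝ => bsPowered σ K r p τ x) (𝓝[>] (0:ℝ))
        (𝓝 (∑ q ∈ Finset.range (p + 1),
          (Nat.choose p q : ℝ) * x ^ (p - q) * (-K) ^ q * 1 * 1)) := by
      unfold bsPowered
      apply tendsto_finset_sum
      intro q hq
      have h2 : Tendsto (fun τ : ℝ => stdNormalCdf (dpq σ K r p q τ x)) (𝓝[>] (0:ℝ)) (𝓝 1) :=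
        cdf_atTop.comp (dpq_tendsto_atTop σ K r hσ hK p q x hKx)
      exact (tendsto_const_nhds.mul (hexp q)).mul h2
    have hsum : ∑ q ∈ Finset.range (p + 1),
        (Nat.choose p q : ℝ) * x ^ (p - q) * (-K) ^ q * 1 * 1 = (x - K) ^ p := by
      rw [show x - K = -K + x by ring, add_pow]
      exact Finset.sum_congr rfl fun q hq => by ring
    rwa [hsum] at hlim
  · intro hxK'
    have hlim : Tendsto (fun τ : ℝ => bsPowered σ K r p τ x) (𝓝[>] (0:ℝ))
        (𝓝 (∑ q ∈ Finset.range (p + 1),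
          (Nat.choose p q : ℝ) * x ^ (p - q) * (-K) ^ q * 1 * 0)) := by
      unfold bsPowered
      apply tendsto_finset_sum
      intro q hq
      have h2 : Tendsto (fun τ : ℝ => stdNormalCdf (dpq σ K r p q τ x)) (𝓝[>] (0:ℝ)) (𝓝 0) :=
        cdf_atBot.comp (dpq_tendsto_atBot σ K r hσ hK p q x hx hxK')
      exact (tendsto_const_nhds.mul (hexp q)).mul h2
    simpa using hlim
end
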